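/- arXiv:2403.13346 — 2 statements merged into one kernel-verified Lean document; each statement's English description precedes it below -/
import Mathlib

section
/- If the covariance P of a mean-zero Gaussian e ∈ ℝⁿ satisfies P ≥ (W⁻¹+R⁻¹)⁻¹ with W, R positive definite, then det P ≥ 1/det(R⁻¹+W⁻¹), and hence P(‖e‖ ≤ ε) ≤ min{ εⁿ √(det(R⁻¹+W⁻¹)) / (2^{n/2} Γ(n/2+1)), 1 }. -/
/-!
Conjugating by the square root `M` of `K = (W⁻¹ + R⁻¹)⁻¹` turns `K ≤ P` into `1 ≤ M⁻¹ P M⁻¹`,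
a matrix whose eigenvalues are all at least `1`; hence `det K ≤ det P`.

The Gaussian density is largest at the origin, where it equals `((2π)ⁿ det P)^(-1/2)`, so the
mass of an `ε`-ball is at most that value times `π^(n/2) εⁿ / Γ(n/2 + 1)`, and the determinant
bound gives `(det P)^(-1/2) ≤ √det (R⁻¹ + W⁻¹)`. The bound by `1` holds because the density
integrates to `1`: the substitution `z = √P x` reduces this to the standard Gaussian integral.
-/

open MeasureTheory Matrix Real
open scoped Pointwise MatrixOrder

theorem Real.sqrt_pow {x : ℝ} (hx : 0 ≤ x) (n : ℕ) : √(x ^ n) = √x ^ n := by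
  rw [← sqrt_sq (pow_nonneg (sqrt_nonneg x) n), pow_right_comm, sq_sqrt hx]

namespace Matrix

variable {ι : Type*} [Fintype ι] [DecidableEq ι]

theorem one_le_det_of_one_le {A : Matrix ι ι ℝ} (h : 1 ≤ A) : 1 ≤ A.det := by
  have hA : A.IsHermitian := by simpa using (le_iff.mp h).1.add isHermitian_one
  have h_spec : spectrum ℝ A = {(1 : ℝ)} + spectrum ℝ (A - 1) := by
    rw [spectrum.singleton_add_eq, map_one, add_sub_cancel]
  have h_eig (i : ι) : 1 ≤ hA.eigenvalues i := by
    obtain ⟨_, rfl, t, ht, hti⟩ := Set.mem_add.mp (h_spec ▸ hA.eigenvalues_mem_spectrum_real i)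
    have : 0 ≤ t := (posSemidef_iff_isHermitian_and_spectrum_nonneg.mp (le_iff.mp h)).2 ht
    linarith
  rw [hA.det_eq_prod_eigenvalues]
  exact Finset.one_le_prod fun i _ => by simpa using h_eig i

theorem PosDef.isUnit_det_sqrt {K : Matrix ι ι ℝ} (hK : K.PosDef) : IsUnit (CFC.sqrt K).det :=
  (isUnit_iff_isUnit_det _).mp (IsStrictlyPositive.sqrt K hK.isStrictlyPositive).isUnit

theorem PosDef.sqrt_mul_inv_mul_sqrt {K : Matrix ι ι ℝ} (hK : K.PosDef) :
    CFC.sqrt K * K⁻¹ * CFC.sqrt K = 1 := by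
  have hu := hK.isUnit_det_sqrt
  nth_rw 2 [← CFC.sqrt_mul_sqrt_self K hK.posSemidef.nonneg]
  rw [Matrix.mul_inv_rev, ← mul_assoc, mul_nonsing_inv _ hu, one_mul, nonsing_inv_mul _ hu]

theorem det_le_det_of_le {K Q : Matrix ι ι ℝ} (hK : K.PosDef) (h : K ≤ Q) : K.det ≤ Q.det := by
  set M := CFC.sqrt K
  have hMM : M * M = K := CFC.sqrt_mul_sqrt_self K hK.posSemidef.nonneg
  have hMh : M.IsHermitian := (CFC.sqrt_nonneg K).posSemidef.1
  have hu : IsUnit M.det := hK.isUnit_det_sqrt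
  have hC : 1 ≤ M⁻¹ * Q * M⁻¹ := by
    have := (le_iff.mp h).conjTranspose_mul_mul_same M⁻¹
    rwa [conjTranspose_nonsing_inv, hMh.eq, ← hMM, mul_sub, sub_mul, ← mul_assoc,
      nonsing_inv_mul _ hu, one_mul, mul_nonsing_inv _ hu] at this
  have hQ : Q.det = M.det * (M⁻¹ * Q * M⁻¹).det * M.det := by
    rw [← det_mul, ← det_mul, mul_assoc, nonsing_inv_mul_cancel_right _ _ hu,
      mul_nonsing_inv_cancel_left _ _ hu]
  calc K.det = K.det * 1 := (mul_one _).symm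
    _ ≤ K.det * (M⁻¹ * Q * M⁻¹).det :=
      mul_le_mul_of_nonneg_left (one_le_det_of_one_le hC) hK.det_pos.le
    _ = Q.det := by
      rw [hQ, ← hMM, det_mul]
      ring

end Matrix

namespace MeasureTheory

theorem withDensity_ofReal_le_mul {α : Type*} [MeasurableSpace α] (μ : Measure α) [SFinite μ]
    {f : α → ℝ} {c : ℝ} (hf : ∀ x, f x ≤ c) (s : Set α) :
    μ.withDensity (fun x => ENNReal.ofReal (f x)) s ≤ ENNReal.ofReal c * μ s := by
  rw [withDensity_apply' _ s, ← setLIntegral_const]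
  exact lintegral_mono fun x => ENNReal.ofReal_le_ofReal (hf x)

theorem Measure.lintegral_eq_abs_det_mul_lintegral_comp {E : Type*} [NormedAddCommGroup E]
    [NormedSpace ℝ E] [MeasurableSpace E] [BorelSpace E] [FiniteDimensional ℝ E] (μ : Measure E)
    [μ.IsAddHaarMeasure] {L : E →ₗ[ℝ] E} (hL : LinearMap.det L ≠ 0) {g : E → ENNReal}
    (hg : Measurable g) :
    ∫⁻ x, g x ∂μ = ENNReal.ofReal |LinearMap.det L| * ∫⁻ x, g (L x) ∂μ := by
  rw [← lintegral_map hg L.continuous_of_finiteDimensional.measurable,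
    map_linearMap_addHaar_eq_smul_addHaar μ hL, lintegral_smul_measure, smul_eq_mul, ← mul_assoc,
    ← ENNReal.ofReal_mul (abs_nonneg _), abs_inv, mul_inv_cancel₀ (abs_pos.2 hL).ne',
    ENNReal.ofReal_one, one_mul]

end MeasureTheory

theorem lintegral_exp_neg_sq_norm_div_two {V : Type*} [NormedAddCommGroup V]
    [InnerProductSpace ℝ V] [FiniteDimensional ℝ V] [MeasurableSpace V] [BorelSpace V] :
    ∫⁻ x : V, ENNReal.ofReal (exp (-‖x‖ ^ 2 / 2)) =
      ENNReal.ofReal (√(2 * π) ^ Module.finrank ℝ V) := by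
  have h := GaussianFourier.integral_rexp_neg_mul_sq_norm (V := V) (b := 1 / 2) (by norm_num)
  rw [div_div_eq_mul_div, div_one, mul_comm, rpow_div_two_eq_sqrt _ (by positivity),
    rpow_natCast] at h
  simp_rw [neg_div, div_eq_inv_mul, ← neg_mul, ← one_div]
  rw [← ofReal_integral_eq_lintegral_ofReal, h]
  · exact .of_integral_ne_zero (h ▸ by positivity)
  · exact .of_forall fun _ => (exp_pos _).le

section Gaussian

variable {ι : Type*} [Fintype ι] [DecidableEq ι] {P : Matrix ι ι ℝ}

theorem lintegral_exp_neg_inv_quadForm_div_two (hP : P.PosDef) :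
    ∫⁻ z : EuclideanSpace ℝ ι, ENNReal.ofReal (exp (-(z.ofLp ⬝ᵥ P⁻¹ *ᵥ z.ofLp) / 2)) =
      ENNReal.ofReal √((2 * π) ^ Fintype.card ι * P.det) := by
  set S := CFC.sqrt P
  have hST : Sᵀ = S := by
    simpa [conjTranspose_eq_transpose_of_trivial] using (CFC.sqrt_nonneg P).posSemidef.1.eq
  have hdet : LinearMap.det (toEuclideanLin S) = √P.det := by
    rw [toEuclideanLin, toLpLin_eq_toLin, LinearMap.det_toLin, hP.posSemidef.det_sqrt,
      RCLike.sqrt_of_nonneg hP.posSemidef.det_nonneg]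
    rfl
  have hquad (x : EuclideanSpace ℝ ι) :
      (toEuclideanLin S x).ofLp ⬝ᵥ P⁻¹ *ᵥ (toEuclideanLin S x).ofLp = ‖x‖ ^ 2 := calc
    _ = x.ofLp ⬝ᵥ (S * P⁻¹ * S) *ᵥ x.ofLp := by
      rw [ofLp_toLpLin, toLin'_apply, ← mulVec_mulVec, ← mulVec_mulVec,
        dotProduct_mulVec x.ofLp S, ← mulVec_transpose, hST]
    _ = ‖x‖ ^ 2 := by
      rw [hP.sqrt_mul_inv_mul_sqrt, one_mulVec, EuclideanSpace.real_norm_sq_eq]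
      simp [dotProduct, sq]
  rw [Measure.lintegral_eq_abs_det_mul_lintegral_comp volume (L := toEuclideanLin S)
      (hdet ▸ (sqrt_pos.2 hP.det_pos).ne') (by fun_prop)]
  simp_rw [hquad]
  rw [lintegral_exp_neg_sq_norm_div_two, finrank_euclideanSpace, hdet,
    abs_of_nonneg (by positivity), ← ENNReal.ofReal_mul (by positivity),
    Real.sqrt_mul (pow_nonneg two_pi_pos.le _), Real.sqrt_pow two_pi_pos.le, mul_comm]

noncomputable def gaussianDensity (P : Matrix ι ι ℝ) (z : EuclideanSpace ℝ ι) : ℝ :=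
  (√((2 * π) ^ Fintype.card ι * P.det))⁻¹ * exp (-(z.ofLp ⬝ᵥ P⁻¹ *ᵥ z.ofLp) / 2)

theorem gaussianDensity_le (hP : P.PosDef) (z : EuclideanSpace ℝ ι) :
    gaussianDensity P z ≤ (√((2 * π) ^ Fintype.card ι * P.det))⁻¹ := by
  have hquad : 0 ≤ z.ofLp ⬝ᵥ P⁻¹ *ᵥ z.ofLp := by
    simpa using hP.inv.posSemidef.dotProduct_mulVec_nonneg z.ofLp
  refine mul_le_of_le_one_right (by positivity) (exp_le_one_iff.2 ?_)
  linarith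

theorem lintegral_gaussianDensity (hP : P.PosDef) :
    ∫⁻ z, ENNReal.ofReal (gaussianDensity P z) = 1 := by
  have hpos : 0 < √((2 * π) ^ Fintype.card ι * P.det) := by
    have := hP.det_pos
    positivity
  simp_rw [gaussianDensity, ENNReal.ofReal_mul (inv_nonneg.2 hpos.le)]
  rw [lintegral_const_mul _ (by fun_prop), lintegral_exp_neg_inv_quadForm_div_two hP,
    ← ENNReal.ofReal_mul (inv_nonneg.2 hpos.le), inv_mul_cancel₀ hpos.ne', ENNReal.ofReal_one]

theorem isProbabilityMeasure_withDensity_gaussianDensity (hP : P.PosDef) :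
    IsProbabilityMeasure (volume.withDensity fun z => ENNReal.ofReal (gaussianDensity P z)) :=
  ⟨by rw [withDensity_apply _ MeasurableSet.univ, Measure.restrict_univ,
    lintegral_gaussianDensity hP]⟩

theorem withDensity_gaussianDensity_closedBall_le [Nonempty ι] (hP : P.PosDef)
    (x : EuclideanSpace ℝ ι) {ε : ℝ} (hε : 0 ≤ ε) :
    volume.withDensity (fun z => ENNReal.ofReal (gaussianDensity P z)) (Metric.closedBall x ε) ≤
      ENNReal.ofReal (ε ^ Fintype.card ι * (√P.det)⁻¹ /
        (2 ^ ((Fintype.card ι : ℝ) / 2) * Gamma (Fintype.card ι / 2 + 1))) := by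
  have hΓ : 0 < Gamma (Fintype.card ι / 2 + 1) := Gamma_pos_of_pos (by positivity)
  have hdet := hP.det_pos
  calc _ ≤ _ := withDensity_ofReal_le_mul volume (gaussianDensity_le hP) _
    _ = _ := by
      rw [EuclideanSpace.volume_closedBall, ← ENNReal.ofReal_pow hε,
        ← ENNReal.ofReal_mul (by positivity), ← ENNReal.ofReal_mul (by positivity),
        rpow_div_two_eq_sqrt _ zero_le_two, rpow_natCast, Real.sqrt_mul (by positivity),
        Real.sqrt_pow (by positivity), Real.sqrt_mul zero_le_two, mul_pow]
      congr 1
      field_simp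

end Gaussian

/-- If the covariance `P` of a mean-zero Gaussian `e ∈ ℝⁿ` (modeled by its density `f`)
satisfies `P ≥ (W⁻¹+R⁻¹)⁻¹` with `W`, `R` positive definite, then
`det P ≥ 1/det(R⁻¹+W⁻¹)`, and hence
`P(‖e‖ ≤ ε) ≤ min{ εⁿ √(det(R⁻¹+W⁻¹)) / (2^{n/2} Γ(n/2+1)), 1 }`. -/
theorem stmt8 {n : ℕ} (W R P : Matrix (Fin n) (Fin n) ℝ)
    (hW : W.PosDef) (hR : R.PosDef) (hP : P.PosDef)
    (hle : (P - (W⁻¹ + R⁻¹)⁻¹).PosSemidef)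
    (ε : ℝ) (hε : 0 < ε)
    (f : EuclideanSpace ℝ (Fin n) → ℝ)
    (hf : ∀ z, f z = (Real.sqrt ((2 * Real.pi) ^ n * P.det))⁻¹ *
      Real.exp (-(∑ i, ∑ j, z i * P⁻¹ i j * z j) / 2))
    (μ : Measure (EuclideanSpace ℝ (Fin n)))
    (hμ : μ = volume.withDensity (fun z => ENNReal.ofReal (f z))) :
    1 / (R⁻¹ + W⁻¹).det ≤ P.det ∧
      (μ (Metric.closedBall 0 ε)).toReal ≤
        min (ε ^ n * Real.sqrt ((R⁻¹ + W⁻¹).det) /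
          (2 ^ ((n : ℝ) / 2) * Real.Gamma ((n : ℝ) / 2 + 1))) 1 := by
  have hS : (R⁻¹ + W⁻¹).PosDef := hR.inv.add hW.inv
  have hdet : 1 / (R⁻¹ + W⁻¹).det ≤ P.det := by
    have := det_le_det_of_le (add_comm R⁻¹ W⁻¹ ▸ hS).inv hle
    rwa [det_nonsing_inv, Ring.inverse_eq_inv', add_comm, ← one_div] at this
  have hf : f = gaussianDensity P := funext fun z => by
    rw [hf, gaussianDensity, Fintype.card_fin, ← toBilin'_apply, toBilin'_apply']
  subst hf
  have : IsProbabilityMeasure μ := hμ ▸ isProbabilityMeasure_withDensity_gaussianDensity hP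
  have hprob : (μ (Metric.closedBall 0 ε)).toReal ≤ 1 := measureReal_le_one
  refine ⟨hdet, le_min ?_ hprob⟩
  obtain rfl | hn := n.eq_zero_or_pos
  · simpa using hprob
  have : Nonempty (Fin n) := Fin.pos_iff_nonempty.mp hn
  refine ENNReal.toReal_le_of_le_ofReal (by positivity) (hμ ▸ ?_)
  refine (withDensity_gaussianDensity_closedBall_le hP 0 hε.le).trans (ENNReal.ofReal_le_ofReal ?_)
  rw [Fintype.card_fin]
  gcongr
  rw [inv_le_comm₀ (sqrt_pos.2 hP.det_pos) (sqrt_pos.2 hS.det_pos), ← sqrt_inv, ← one_div]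
  exact sqrt_le_sqrt hdet
end

section
/- Let z ∼ N(0,1) and let ε, γ, b satisfy ε > 0, γ ∈ (0,1/2), b > 0. If r ≥ (b/(2ε))·(K + √(K² + 2ε)) with K = Q⁻¹(γ) (inverse Gaussian tail function), then for every v ∈ ℝᵐ with ‖v‖ ≤ b, P(z ≥ εr/‖v‖ − ‖v‖/(2r)) ≤ γ. -/
open MeasureTheory ProbabilityTheory

/-- Let `z ∼ N(0,1)`, `Q(t) = P(z ≥ t)` the standard Gaussian tail function, and let
`ε > 0`, `γ ∈ (0,1/2)`, `b > 0`, `K = Q⁻¹(γ) ≥ 0`.  If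
`r ≥ (b/(2ε))·(K + √(K² + 2ε))`, then for every nonzero `v ∈ ℝᵐ` with `‖v‖ ≤ b`,
`P(z ≥ εr/‖v‖ − ‖v‖/(2r)) ≤ γ`. -/
theorem stmt15 {m : ℕ} (ε γ b K r : ℝ)
    (hε : 0 < ε) (hγ0 : 0 < γ) (hγ1 : γ < 1 / 2) (hb : 0 < b)
    (Q : ℝ → ℝ) (hQ : ∀ t, Q t = ((gaussianReal 0 1) (Set.Ici t)).toReal)
    (hK0 : 0 ≤ K) (hKγ : Q K = γ)
    (hr : (b / (2 * ε)) * (K + Real.sqrt (K ^ 2 + 2 * ε)) ≤ r)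
    (v : EuclideanSpace ℝ (Fin m)) (hv : v ≠ 0) (hvb : ‖v‖ ≤ b) :
    Q (ε * r / ‖v‖ - ‖v‖ / (2 * r)) ≤ γ := by
  set a := ‖v‖ with ha
  have ha0 : 0 < a := norm_pos_iff.mpr hv
  set s := Real.sqrt (K ^ 2 + 2 * ε) with hs
  have hs2 : s ^ 2 = K ^ 2 + 2 * ε := Real.sq_sqrt (by positivity)
  have hs0 : 0 ≤ s := Real.sqrt_nonneg _
  have hsK : K < s := by nlinarith
  have hr0 : 0 < r := lt_of_lt_of_le (by positivity) hr
  -- key quadratic inequality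
  have hra : a / (2 * ε) * (K + s) ≤ r := le_trans (by
    apply mul_le_mul_of_nonneg_right _ (by nlinarith)
    exact div_le_div_of_nonneg_right hvb (by positivity) |>.trans_eq rfl) hr
  have hquad : 0 ≤ 2 * ε * r ^ 2 - 2 * a * K * r - a ^ 2 := by
    have h1' : a * (K + s) ≤ 2 * ε * r := by
      have := mul_le_mul_of_nonneg_left hra (by positivity : (0:ℝ) ≤ 2 * ε)
      have hε' : (2 * ε) ≠ 0 := by positivity
      field_simp at this
      linarith
    have h2' : a * (K - s) ≤ 2 * ε * r := by
      have : a * (K - s) ≤ 0 :=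
        mul_nonpos_of_nonneg_of_nonpos (le_of_lt ha0) (by linarith)
      nlinarith
    nlinarith [mul_nonneg (sub_nonneg.mpr h1') (sub_nonneg.mpr h2'), hs2, hε]
  have hKle : K ≤ ε * r / a - a / (2 * r) := by
    have e1 : (ε * r / a) * a = ε * r := div_mul_cancel₀ _ (ne_of_gt ha0)
    have e2 : (a / (2 * r)) * (2 * r) = a := div_mul_cancel₀ _ (by positivity)
    nlinarith [mul_pos ha0 hr0, sq_nonneg (ε * r / a - a / (2 * r) - K)]
  rw [hQ, ← hKγ, hQ]
  apply ENNReal.toReal_mono (measure_ne_top _ _)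
  exact measure_mono (Set.Ici_subset_Ici.mpr hKle)
end
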